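/- Assume the standing hypothesis: Γ is a finite simple connected k-regular graph with k ≥ 3, G ≤ Aut(Γ), α a vertex with local girth λ(Γ,α) ≥ 2s+2 (s ≥ 1), G_α transitive on Γ_s(α), and Δ a G_α-orbit in Γ_{s+1}(α). With Γ(α)={β_1,…,β_k}, X={1,…,k}, B_j = Γ_s(α) ∩ Γ_{s−1}(β_j), Δ_j = Δ ∩ Γ_s(β_j), Δ(S) = ∩_{j∈S} Δ_j, B_j(S) = ∪_{δ∈Δ(S)} (B_j ∩ Γ(δ)), c_s' = |Γ(δ)∩Γ_s(α)|, b_s' = |Γ(γ)∩Δ|, 𝓑(c_s') = {S ⊆ X : |S| = c_s', Δ(S) ≠ ∅}, and 𝓑(c_s',j) = {S ∈ 𝓑(c_s') : j ∈ S}: if b_s' = 1, then for every j ∈ X and every S ∈ 𝓑(c_s',j): (i) the edges of Γ between B_j and Δ_j form a perfect matching between B_j and Δ_j; (ii) the edges between B_j(S) and Δ(S) form a perfect matching between them; (iii) {B_j(S) : S ∈ 𝓑(c_s',j)} is a partition of B_j; and (iv) {Δ(S) : S ∈ 𝓑(c_s',j)} is a partition of Δ_j. -/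

import Mathlib

open SimpleGraph

/-- `G` is a subgroup of the automorphism group of `Γ`:
every element of `G` preserves adjacency. -/
def IsAutSubgroup {V : Type*} (Γ : SimpleGraph V) (G : Subgroup (Equiv.Perm V)) : Prop :=
  ∀ g ∈ G, ∀ u v : V, Γ.Adj (g u) (g v) ↔ Γ.Adj u v

/-- `Δ_j = Δ ∩ Γ_s(β_j)`: the part of `Δ` at distance `s` from the neighbour `b = β_j` of `α`. -/
def DeltaJ {V : Type*} (Γ : SimpleGraph V) (s : ℕ) (Δ : Set V) (b : V) : Set V :=
  Δ ∩ {v | Γ.dist b v = s}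

/-- `Δ(S) = ⋂_{j ∈ S} Δ_j`. -/
def DeltaS {V : Type*} (Γ : SimpleGraph V) (s : ℕ) (Δ : Set V) {k : ℕ} (β : Fin k → V)
    (S : Finset (Fin k)) : Set V :=
  ⋂ j ∈ S, DeltaJ Γ s Δ (β j)

/-- `𝓑(c') = {S ⊆ X : |S| = c' and Δ(S) ≠ ∅}`. -/
def Blocks {V : Type*} (Γ : SimpleGraph V) (s : ℕ) (Δ : Set V) {k : ℕ} (β : Fin k → V)
    (c' : ℕ) : Set (Finset (Fin k)) :=
  {S | S.card = c' ∧ DeltaS Γ s Δ β S ≠ ∅}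

/-- `B_j = Γ_s(α) ∩ Γ_{s-1}(β_j)` where `b = β_j`. -/
def BJ {V : Type*} (Γ : SimpleGraph V) (α : V) (s : ℕ) (b : V) : Set V :=
  {v | Γ.dist α v = s} ∩ {v | Γ.dist b v = s - 1}

/-- `B_j(S) = ⋃_{δ ∈ Δ(S)} (B_j ∩ Γ(δ))`. -/
def BJS {V : Type*} (Γ : SimpleGraph V) (α : V) (s : ℕ) (Δ : Set V) {k : ℕ} (β : Fin k → V)
    (j : Fin k) (S : Finset (Fin k)) : Set V :=
  ⋃ δ ∈ DeltaS Γ s Δ β S, BJ Γ α s (β j) ∩ Γ.neighborSet δ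

/-!
Every `γ ∈ Γ_s(α)` lies in `B_j` for exactly one `j`, since two such `j` would close a cycle of
length at most `2s` through `α`. For `δ ∈ Δ` let `J(δ) = {j : ∂(β_j, δ) = s}`; the neighbours of
`δ` in `Γ_s(α)` split into the nonempty sets `Γ(δ) ∩ B_j`, `j ∈ J(δ)`, so `|J(δ)| ≤ c_s'`. The
size of `J(δ)` is constant on the `G_α`-orbit `Δ`, and a block `S ⊆ J(δ₁)` of size `c_s'` forces
`|J(δ)| = c_s'` for all `δ ∈ Δ`. Hence every `δ ∈ Δ_j` has exactly one neighbour in `B_j`, and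
`Δ(S)` is the fibre `{δ ∈ Δ : J(δ) = S}`. Since every `γ ∈ Γ_s(α)` has exactly one neighbour in
`Δ` (`b_s' = 1`), the matchings and partitions follow.
-/

namespace SimpleGraph

variable {V : Type*} {Γ : SimpleGraph V}

lemma Walk.dist_add_dist_le_length {u v z : V} (p : Γ.Walk u v) (hz : z ∈ p.support) :
    Γ.dist u z + Γ.dist z v ≤ p.length := by
  classical
  calc Γ.dist u z + Γ.dist z v ≤ (p.takeUntil z hz).length + (p.dropUntil z hz).length :=
        add_le_add (dist_le _) (dist_le _)
    _ = p.length := by rw [← Walk.length_append, Walk.take_spec]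

lemma exists_isCycle_length_le_of_notMem_support {a b₁ b₂ : V} (h₁ : Γ.Adj a b₁)
    (h₂ : Γ.Adj a b₂) (hne : b₁ ≠ b₂) (p : Γ.Walk b₁ b₂) (ha : a ∉ p.support) :
    ∃ c : Γ.Walk a a, c.IsCycle ∧ c.length ≤ p.length + 2 := by
  classical
  have haq : a ∉ p.bypass.support := fun h => ha (p.support_bypass_subset_support h)
  refine ⟨Walk.cons h₁ (p.bypass.concat h₂.symm), ?_, ?_⟩
  · rw [Walk.cons_isCycle_iff, Walk.edges_concat, List.concat_eq_append, List.mem_append,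
      List.mem_singleton, not_or]
    refine ⟨p.bypass_isPath.concat haq h₂.symm, fun h => haq ?_, ?_⟩
    · exact p.bypass.fst_mem_support_of_mem_edges h
    · rw [Sym2.eq_iff]
      rintro (⟨h, -⟩ | ⟨-, h⟩)
      exacts [h₂.ne h, hne h]
  · simp only [Walk.length_cons, Walk.length_concat]
    have := p.length_bypass_le_length
    omega

lemma Connected.exists_adj_dist_eq_sub_one (hconn : Γ.Connected) {u v : V} (hne : u ≠ v) :
    ∃ w, Γ.Adj u w ∧ Γ.dist w v = Γ.dist u v - 1 := by
  obtain ⟨p, hp⟩ := hconn.exists_walk_length_eq_dist u v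
  cases p with
  | nil => exact absurd rfl hne
  | @cons _ w _ h p =>
    refine ⟨w, h, le_antisymm ?_ ?_⟩
    · have := dist_le p
      simp only [Walk.length_cons] at hp
      omega
    · have := hconn.dist_triangle (u := u) (v := w) (w := v)
      rw [dist_eq_one_iff_adj.2 h] at this
      omega

lemma Hom.edist_le {W : Type*} {Γ' : SimpleGraph W} (f : Γ →g Γ') (u v : V) :
    Γ'.edist (f u) (f v) ≤ Γ.edist u v := by
  rcases eq_or_ne (Γ.edist u v) ⊤ with h | h
  · simp [h]
  · obtain ⟨p, hp⟩ := (reachable_of_edist_ne_top h).exists_walk_length_eq_edist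
    rw [← hp, ← p.length_map f]
    exact SimpleGraph.edist_le _

lemma Iso.dist_eq {W : Type*} {Γ' : SimpleGraph W} (f : Γ ≃g Γ') (u v : V) :
    Γ'.dist (f u) (f v) = Γ.dist u v := by
  refine congrArg ENat.toNat (le_antisymm (f.toHom.edist_le u v) ?_)
  simpa using f.symm.toHom.edist_le (f u) (f v)

end SimpleGraph

namespace Finset

variable {ι α : Type*} [Finite α] {I : Finset ι} {B : ι → Set α}

lemma set_ncard_biUnion (hdisj : (I : Set ι).PairwiseDisjoint B) :
    (⋃ i ∈ I, B i).ncard = ∑ i ∈ I, (B i).ncard := by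
  rw [← finsum_mem_coe_finset]
  exact I.finite_toSet.ncard_biUnion (fun i _ => Set.toFinite (B i)) hdisj

lemma card_le_set_ncard_biUnion (hdisj : (I : Set ι).PairwiseDisjoint B)
    (hne : ∀ i ∈ I, (B i).Nonempty) : #I ≤ (⋃ i ∈ I, B i).ncard := by
  rw [set_ncard_biUnion hdisj, card_eq_sum_ones]
  exact sum_le_sum fun i hi => (hne i hi).ncard_pos

lemma ncard_eq_one_of_set_ncard_biUnion_le_card (hdisj : (I : Set ι).PairwiseDisjoint B)
    (hne : ∀ i ∈ I, (B i).Nonempty) (hle : (⋃ i ∈ I, B i).ncard ≤ #I) :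
    ∀ i ∈ I, (B i).ncard = 1 := by
  have hsum : ∑ i ∈ I, 1 = ∑ i ∈ I, (B i).ncard := by
    rw [← card_eq_sum_ones, ← set_ncard_biUnion hdisj]
    exact le_antisymm (card_le_set_ncard_biUnion hdisj hne) hle
  exact fun i hi => ((sum_eq_sum_iff_of_le fun i hi => (hne i hi).ncard_pos).1 hsum i hi).symm

end Finset

open scoped Finset

/-- For `δ ∈ Δ`, the indices `j` with `δ ∈ Δ_j` (the set `J(δ)` of the introduction). -/
noncomputable def branchesAt {V : Type*} (Γ : SimpleGraph V) (s : ℕ) {k : ℕ} (β : Fin k → V)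
    (δ : V) : Finset (Fin k) :=
  Finset.univ.filter fun j => Γ.dist (β j) δ = s

section Branches

variable {V : Type*} {Γ : SimpleGraph V} {α : V} {s k : ℕ} {β : Fin k → V}

@[simp]
lemma mem_branchesAt {δ : V} {j : Fin k} : j ∈ branchesAt Γ s β δ ↔ Γ.dist (β j) δ = s := by
  simp [branchesAt]

lemma exists_mem_BJ (hconn : Γ.Connected) (hβran : ∀ v, Γ.Adj α v ↔ ∃ j, β j = v)
    (hs : 1 ≤ s) {γ : V} (hγ : Γ.dist α γ = s) : ∃ j, γ ∈ BJ Γ α s (β j) := by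
  have hne : α ≠ γ := by
    rintro rfl
    simp only [dist_self] at hγ
    omega
  obtain ⟨b, hb, hbγ⟩ := hconn.exists_adj_dist_eq_sub_one hne
  obtain ⟨j, rfl⟩ := (hβran b).1 hb
  exact ⟨j, hγ, show Γ.dist (β j) γ = s - 1 by rw [hbγ, hγ]⟩

lemma eq_of_mem_BJ (hconn : Γ.Connected)
    (hgirth : ∀ w : Γ.Walk α α, w.IsCycle → 2 * s < w.length) {b₁ b₂ γ : V}
    (h₁ : Γ.Adj α b₁) (h₂ : Γ.Adj α b₂) (hγ₁ : γ ∈ BJ Γ α s b₁) (hγ₂ : γ ∈ BJ Γ α s b₂) :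
    b₁ = b₂ := by
  by_contra hne
  have hα : ∀ {b : V} (p : Γ.Walk b γ), Γ.Adj α b → p.length = s - 1 → α ∉ p.support := by
    intro b p hb hp hmem
    have := p.dist_add_dist_le_length hmem
    rw [dist_comm, dist_eq_one_iff_adj.2 hb, hγ₁.1] at this
    omega
  obtain ⟨p₁, hp₁⟩ := hconn.exists_walk_length_eq_dist b₁ γ
  obtain ⟨p₂, hp₂⟩ := hconn.exists_walk_length_eq_dist b₂ γ
  obtain ⟨c, hc, hlen⟩ := exists_isCycle_length_le_of_notMem_support h₁ h₂ hne
    (p₁.append p₂.reverse) (by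
      rw [Walk.mem_support_append_iff, Walk.support_reverse, List.mem_reverse, not_or]
      exact ⟨hα p₁ h₁ (hp₁.trans hγ₁.2), hα p₂ h₂ (hp₂.trans hγ₂.2)⟩)
  rw [Walk.length_append, Walk.length_reverse, hp₁, hp₂, hγ₁.2, hγ₂.2] at hlen
  have := hgirth c hc
  have := hc.three_le_length
  omega

lemma pairwiseDisjoint_inter_BJ (hconn : Γ.Connected)
    (hgirth : ∀ w : Γ.Walk α α, w.IsCycle → 2 * s < w.length) (hβinj : Function.Injective β)
    (hβadj : ∀ j, Γ.Adj α (β j)) (I : Set (Fin k)) (t : Set V) :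
    I.PairwiseDisjoint fun j => t ∩ BJ Γ α s (β j) :=
  fun i _ j _ hij => Set.disjoint_left.2 fun _ hi hj =>
    hij (hβinj (eq_of_mem_BJ hconn hgirth (hβadj i) (hβadj j) hi.2 hj.2))

lemma dist_eq_of_adj_of_mem_BJ (hconn : Γ.Connected) (hs : 1 ≤ s) {b γ δ : V}
    (hb : Γ.Adj α b) (hδ : Γ.dist α δ = s + 1) (hγ : γ ∈ BJ Γ α s b) (hγδ : Γ.Adj γ δ) :
    Γ.dist b δ = s := by
  have h₁ := hconn.dist_triangle (u := b) (v := γ) (w := δ)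
  have h₂ := hconn.dist_triangle (u := α) (v := b) (w := δ)
  rw [dist_eq_one_iff_adj.2 hγδ, hγ.2] at h₁
  rw [dist_eq_one_iff_adj.2 hb, hδ] at h₂
  omega

lemma neighborSet_inter_BJ_nonempty (hconn : Γ.Connected) (hs : 1 ≤ s) {b δ : V}
    (hb : Γ.Adj α b) (hδ : Γ.dist α δ = s + 1) (hbδ : Γ.dist b δ = s) :
    (Γ.neighborSet δ ∩ BJ Γ α s b).Nonempty := by
  have hne : δ ≠ b := by
    rintro rfl
    simp only [dist_self] at hbδ
    omega
  obtain ⟨γ, hδγ, hγb⟩ := hconn.exists_adj_dist_eq_sub_one hne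
  rw [dist_comm (u := δ), hbδ, dist_comm] at hγb
  have h₁ := hconn.dist_triangle (u := α) (v := b) (w := γ)
  have h₂ := hconn.dist_triangle (u := α) (v := γ) (w := δ)
  rw [dist_eq_one_iff_adj.2 hb, hγb] at h₁
  rw [dist_eq_one_iff_adj.2 hδγ.symm, hδ] at h₂
  exact ⟨γ, hδγ, (by omega : Γ.dist α γ = s), show Γ.dist b γ = s - 1 from hγb⟩

lemma neighborSet_inter_sphere_eq_biUnion (hconn : Γ.Connected) (hs : 1 ≤ s)
    (hβran : ∀ v, Γ.Adj α v ↔ ∃ j, β j = v) {δ : V} (hδ : Γ.dist α δ = s + 1) :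
    Γ.neighborSet δ ∩ {w | Γ.dist α w = s} =
      ⋃ j ∈ branchesAt Γ s β δ, Γ.neighborSet δ ∩ BJ Γ α s (β j) := by
  ext γ
  simp only [Set.mem_inter_iff, Set.mem_iUnion, mem_branchesAt, exists_prop]
  constructor
  · rintro ⟨hδγ, hγ⟩
    obtain ⟨j, hj⟩ := exists_mem_BJ hconn hβran hs hγ
    exact ⟨j, dist_eq_of_adj_of_mem_BJ hconn hs ((hβran _).2 ⟨j, rfl⟩) hδ hj hδγ.symm, hδγ, hj⟩
  · rintro ⟨j, -, hδγ, hγ⟩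
    exact ⟨hδγ, hγ.1⟩

lemma card_branchesAt_le [Finite V] (hconn : Γ.Connected) (hs : 1 ≤ s)
    (hgirth : ∀ w : Γ.Walk α α, w.IsCycle → 2 * s < w.length) (hβinj : Function.Injective β)
    (hβran : ∀ v, Γ.Adj α v ↔ ∃ j, β j = v) {δ : V} (hδ : Γ.dist α δ = s + 1) :
    #(branchesAt Γ s β δ) ≤ (Γ.neighborSet δ ∩ {w | Γ.dist α w = s}).ncard := by
  have hβadj : ∀ j, Γ.Adj α (β j) := fun j => (hβran _).2 ⟨j, rfl⟩
  rw [neighborSet_inter_sphere_eq_biUnion hconn hs hβran hδ]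
  exact Finset.card_le_set_ncard_biUnion
    (pairwiseDisjoint_inter_BJ hconn hgirth hβinj hβadj _ _)
    fun j hj => neighborSet_inter_BJ_nonempty hconn hs (hβadj j) hδ (mem_branchesAt.1 hj)

lemma ncard_neighborSet_inter_BJ_eq_one [Finite V] (hconn : Γ.Connected) (hs : 1 ≤ s)
    (hgirth : ∀ w : Γ.Walk α α, w.IsCycle → 2 * s < w.length) (hβinj : Function.Injective β)
    (hβran : ∀ v, Γ.Adj α v ↔ ∃ j, β j = v) {δ : V} (hδ : Γ.dist α δ = s + 1)
    (hle : (Γ.neighborSet δ ∩ {w | Γ.dist α w = s}).ncard ≤ #(branchesAt Γ s β δ))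
    {j : Fin k} (hj : j ∈ branchesAt Γ s β δ) :
    (Γ.neighborSet δ ∩ BJ Γ α s (β j)).ncard = 1 := by
  have hβadj : ∀ j, Γ.Adj α (β j) := fun j => (hβran _).2 ⟨j, rfl⟩
  rw [neighborSet_inter_sphere_eq_biUnion hconn hs hβran hδ] at hle
  exact Finset.ncard_eq_one_of_set_ncard_biUnion_le_card
    (pairwiseDisjoint_inter_BJ hconn hgirth hβinj hβadj _ _)
    (fun j hj => neighborSet_inter_BJ_nonempty hconn hs (hβadj j) hδ (mem_branchesAt.1 hj))
    hle j hj

lemma card_branchesAt_apply (hβran : ∀ v, Γ.Adj α v ↔ ∃ j, β j = v)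
    (hβinj : Function.Injective β) (g : Γ ≃g Γ) (hg : g α = α) (δ : V) :
    #(branchesAt Γ s β (g δ)) = #(branchesAt Γ s β δ) := by
  classical
  have himage : (branchesAt Γ s β (g δ)).image β = (branchesAt Γ s β δ).image (g ∘ β) := by
    ext b
    simp only [Finset.mem_image, mem_branchesAt, Function.comp_apply]
    constructor
    · rintro ⟨j, hj, rfl⟩
      have hadj : Γ.Adj α (g.symm (β j)) := by
        rw [← g.symm_apply_eq.2 hg.symm, g.symm.map_adj_iff]
        exact (hβran _).2 ⟨j, rfl⟩
      obtain ⟨i, hi⟩ := (hβran _).1 hadj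
      refine ⟨i, ?_, by rw [hi, g.apply_symm_apply]⟩
      rw [← g.dist_eq, hi, g.apply_symm_apply, hj]
    · rintro ⟨i, hi, rfl⟩
      have hadj : Γ.Adj α (g (β i)) := by
        rw [← hg, g.map_adj_iff]
        exact (hβran _).2 ⟨i, rfl⟩
      obtain ⟨j, hj⟩ := (hβran _).1 hadj
      exact ⟨j, by rw [hj, g.dist_eq, hi], hj⟩
  rw [← Finset.card_image_of_injective _ hβinj, himage,
    Finset.card_image_of_injective _ (g.injective.comp hβinj)]

end Branches

section Blocks

variable {V : Type*} {Γ : SimpleGraph V} {α : V} {s k c' : ℕ} {β : Fin k → V} {Δ : Set V}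

lemma card_branchesAt_eq_of_mem_orbit {G : Subgroup (Equiv.Perm V)} (hGaut : IsAutSubgroup Γ G)
    (hβran : ∀ v, Γ.Adj α v ↔ ∃ j, β j = v) (hβinj : Function.Injective β) {δ₀ δ : V}
    (hδ : ∃ g ∈ G, g α = α ∧ g δ₀ = δ) :
    #(branchesAt Γ s β δ) = #(branchesAt Γ s β δ₀) := by
  obtain ⟨g, hg, hgα, rfl⟩ := hδ
  exact card_branchesAt_apply hβran hβinj ⟨g, hGaut g hg _ _⟩ hgα δ₀

lemma mem_DeltaS_iff {T : Finset (Fin k)} (hT : T.Nonempty) {δ : V} :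
    δ ∈ DeltaS Γ s Δ β T ↔ δ ∈ Δ ∧ T ⊆ branchesAt Γ s β δ := by
  obtain ⟨j, hj⟩ := hT
  simp only [DeltaS, DeltaJ, Set.mem_iInter, Set.mem_inter_iff]
  exact ⟨fun h => ⟨(h j hj).1, fun i hi => mem_branchesAt.2 (h i hi).2⟩,
    fun h i hi => ⟨h.1, mem_branchesAt.1 (h.2 hi)⟩⟩

lemma card_branchesAt_eq_of_mem_Blocks (hle : ∀ δ ∈ Δ, #(branchesAt Γ s β δ) ≤ c')
    (hconst : ∀ δ ∈ Δ, ∀ δ' ∈ Δ, #(branchesAt Γ s β δ) = #(branchesAt Γ s β δ'))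
    {S : Finset (Fin k)} (hS : S ∈ Blocks Γ s Δ β c') (hSne : S.Nonempty) :
    ∀ δ ∈ Δ, #(branchesAt Γ s β δ) = c' := by
  obtain ⟨δ₁, hδ₁⟩ := Set.nonempty_iff_ne_empty.2 hS.2
  obtain ⟨hδ₁Δ, hSsub⟩ := (mem_DeltaS_iff hSne).1 hδ₁
  refine fun δ hδ => le_antisymm (hle δ hδ) ?_
  calc c' = #S := hS.1.symm
    _ ≤ #(branchesAt Γ s β δ₁) := Finset.card_le_card hSsub
    _ = #(branchesAt Γ s β δ) := hconst δ₁ hδ₁Δ δ hδ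

lemma mem_DeltaS_branchesAt {δ : V} (hδ : δ ∈ Δ) : δ ∈ DeltaS Γ s Δ β (branchesAt Γ s β δ) :=
  Set.mem_iInter₂.2 fun _ hj => ⟨hδ, mem_branchesAt.1 hj⟩

lemma DeltaS_subset_DeltaJ {T : Finset (Fin k)} {j : Fin k} (hj : j ∈ T) :
    DeltaS Γ s Δ β T ⊆ DeltaJ Γ s Δ (β j) :=
  Set.biInter_subset_of_mem hj

lemma branchesAt_mem_Blocks (hcard : ∀ δ ∈ Δ, #(branchesAt Γ s β δ) = c') {δ : V}
    (hδ : δ ∈ Δ) : branchesAt Γ s β δ ∈ Blocks Γ s Δ β c' :=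
  ⟨hcard δ hδ, Set.nonempty_iff_ne_empty.1 ⟨δ, mem_DeltaS_branchesAt hδ⟩⟩

lemma eq_branchesAt_of_mem_DeltaS (hcard : ∀ δ ∈ Δ, #(branchesAt Γ s β δ) = c')
    {T : Finset (Fin k)} (hT : T ∈ Blocks Γ s Δ β c') (hTne : T.Nonempty) {δ : V}
    (hδ : δ ∈ DeltaS Γ s Δ β T) : T = branchesAt Γ s β δ := by
  obtain ⟨hδΔ, hsub⟩ := (mem_DeltaS_iff hTne).1 hδ
  exact Finset.eq_of_subset_of_card_le hsub (by rw [hcard δ hδΔ, hT.1])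

lemma biUnion_DeltaS_eq_DeltaJ (hcard : ∀ δ ∈ Δ, #(branchesAt Γ s β δ) = c') (j : Fin k) :
    ⋃ T ∈ {T | T ∈ Blocks Γ s Δ β c' ∧ j ∈ T}, DeltaS Γ s Δ β T = DeltaJ Γ s Δ (β j) := by
  refine subset_antisymm (Set.iUnion₂_subset fun T hT => DeltaS_subset_DeltaJ hT.2) ?_
  rintro δ ⟨hδΔ, hδj⟩
  exact Set.mem_biUnion ⟨branchesAt_mem_Blocks hcard hδΔ, mem_branchesAt.2 hδj⟩
    (mem_DeltaS_branchesAt hδΔ)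

lemma disjoint_DeltaS (hcard : ∀ δ ∈ Δ, #(branchesAt Γ s β δ) = c')
    {T₁ T₂ : Finset (Fin k)} (hT₁ : T₁ ∈ Blocks Γ s Δ β c') (hT₂ : T₂ ∈ Blocks Γ s Δ β c')
    (hT₁ne : T₁.Nonempty) (hT₂ne : T₂.Nonempty) (hne : T₁ ≠ T₂) :
    Disjoint (DeltaS Γ s Δ β T₁) (DeltaS Γ s Δ β T₂) :=
  Set.disjoint_left.2 fun _ h₁ h₂ => hne <|
    (eq_branchesAt_of_mem_DeltaS hcard hT₁ hT₁ne h₁).trans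
      (eq_branchesAt_of_mem_DeltaS hcard hT₂ hT₂ne h₂).symm

lemma BJS_subset_BJ {j : Fin k} {T : Finset (Fin k)} :
    BJS Γ α s Δ β j T ⊆ BJ Γ α s (β j) :=
  Set.iUnion₂_subset fun _ _ => Set.inter_subset_left

lemma mem_BJS_iff {j : Fin k} {T : Finset (Fin k)} {γ : V} :
    γ ∈ BJS Γ α s Δ β j T ↔ γ ∈ BJ Γ α s (β j) ∧ ∃ δ ∈ DeltaS Γ s Δ β T, Γ.Adj γ δ := by
  simp only [BJS, Set.mem_iUnion, Set.mem_inter_iff, mem_neighborSet, exists_prop]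
  exact ⟨fun ⟨δ, hδ, hγ, hδγ⟩ => ⟨hγ, δ, hδ, hδγ.symm⟩,
    fun ⟨hγ, δ, hδ, hγδ⟩ => ⟨δ, hδ, hγ, hγδ.symm⟩⟩

lemma eq_of_adj_mem_of_adj_mem
    (hb1 : ∀ γ : V, Γ.dist α γ = s → (Γ.neighborSet γ ∩ Δ).ncard = 1) {γ δ₁ δ₂ : V}
    (hγ : Γ.dist α γ = s) (h₁ : Γ.Adj γ δ₁) (hδ₁ : δ₁ ∈ Δ) (h₂ : Γ.Adj γ δ₂) (hδ₂ : δ₂ ∈ Δ) :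
    δ₁ = δ₂ := by
  obtain ⟨δ, hδ⟩ := Set.ncard_eq_one.1 (hb1 γ hγ)
  have e₁ : δ₁ ∈ Γ.neighborSet γ ∩ Δ := ⟨h₁, hδ₁⟩
  have e₂ : δ₂ ∈ Γ.neighborSet γ ∩ Δ := ⟨h₂, hδ₂⟩
  rw [hδ] at e₁ e₂
  exact e₁.trans e₂.symm

lemma neighborSet_inter_DeltaJ_eq (hconn : Γ.Connected) (hs : 1 ≤ s)
    (hΔsub : Δ ⊆ {v | Γ.dist α v = s + 1}) {b γ : V} (hb : Γ.Adj α b) (hγ : γ ∈ BJ Γ α s b) :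
    Γ.neighborSet γ ∩ DeltaJ Γ s Δ b = Γ.neighborSet γ ∩ Δ := by
  refine subset_antisymm (Set.inter_subset_inter_right _ Set.inter_subset_left) ?_
  rintro δ ⟨hγδ, hδ⟩
  exact ⟨hγδ, hδ, dist_eq_of_adj_of_mem_BJ hconn hs hb (hΔsub hδ) hγ hγδ⟩

lemma neighborSet_inter_DeltaS_eq
    (hb1 : ∀ γ : V, Γ.dist α γ = s → (Γ.neighborSet γ ∩ Δ).ncard = 1)
    {j : Fin k} {T : Finset (Fin k)} (hT : T.Nonempty) {γ : V} (hγ : γ ∈ BJS Γ α s Δ β j T) :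
    Γ.neighborSet γ ∩ DeltaS Γ s Δ β T = Γ.neighborSet γ ∩ Δ := by
  obtain ⟨hγB, δ, hδ, hγδ⟩ := mem_BJS_iff.1 hγ
  refine subset_antisymm
    (Set.inter_subset_inter_right _ fun _ hx => ((mem_DeltaS_iff hT).1 hx).1) ?_
  rintro δ' ⟨hγδ', hδ'⟩
  obtain rfl := eq_of_adj_mem_of_adj_mem hb1 hγB.1 hγδ' hδ' hγδ ((mem_DeltaS_iff hT).1 hδ).1
  exact ⟨hγδ, hδ⟩

lemma neighborSet_inter_BJS_eq {j : Fin k} {T : Finset (Fin k)} {δ : V}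
    (hδ : δ ∈ DeltaS Γ s Δ β T) :
    Γ.neighborSet δ ∩ BJS Γ α s Δ β j T = Γ.neighborSet δ ∩ BJ Γ α s (β j) := by
  refine subset_antisymm (Set.inter_subset_inter_right _ BJS_subset_BJ) ?_
  rintro γ ⟨hδγ, hγ⟩
  exact ⟨hδγ, mem_BJS_iff.2 ⟨hγ, δ, hδ, hδγ.symm⟩⟩

lemma biUnion_BJS_eq_BJ (hconn : Γ.Connected) (hs : 1 ≤ s)
    (hΔsub : Δ ⊆ {v | Γ.dist α v = s + 1})
    (hb1 : ∀ γ : V, Γ.dist α γ = s → (Γ.neighborSet γ ∩ Δ).ncard = 1)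
    (hcard : ∀ δ ∈ Δ, #(branchesAt Γ s β δ) = c') {j : Fin k} (hj : Γ.Adj α (β j)) :
    ⋃ T ∈ {T | T ∈ Blocks Γ s Δ β c' ∧ j ∈ T}, BJS Γ α s Δ β j T = BJ Γ α s (β j) := by
  refine subset_antisymm (Set.iUnion₂_subset fun _ _ => BJS_subset_BJ) fun γ hγ => ?_
  obtain ⟨δ, hγδ, hδ⟩ := Set.nonempty_of_ncard_ne_zero (by rw [hb1 γ hγ.1]; exact one_ne_zero)
  exact Set.mem_biUnion
    ⟨branchesAt_mem_Blocks hcard hδ,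
      mem_branchesAt.2 (dist_eq_of_adj_of_mem_BJ hconn hs hj (hΔsub hδ) hγ hγδ)⟩
    (mem_BJS_iff.2 ⟨hγ, δ, mem_DeltaS_branchesAt hδ, hγδ⟩)

lemma disjoint_BJS (hb1 : ∀ γ : V, Γ.dist α γ = s → (Γ.neighborSet γ ∩ Δ).ncard = 1)
    (hcard : ∀ δ ∈ Δ, #(branchesAt Γ s β δ) = c') {j : Fin k} {T₁ T₂ : Finset (Fin k)}
    (hT₁ : T₁ ∈ Blocks Γ s Δ β c') (hT₂ : T₂ ∈ Blocks Γ s Δ β c')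
    (hT₁ne : T₁.Nonempty) (hT₂ne : T₂.Nonempty) (hne : T₁ ≠ T₂) :
    Disjoint (BJS Γ α s Δ β j T₁) (BJS Γ α s Δ β j T₂) := by
  refine Set.disjoint_left.2 fun γ h₁ h₂ => ?_
  obtain ⟨hγ, δ₁, hδ₁, hγδ₁⟩ := mem_BJS_iff.1 h₁
  obtain ⟨-, δ₂, hδ₂, hγδ₂⟩ := mem_BJS_iff.1 h₂
  obtain rfl := eq_of_adj_mem_of_adj_mem hb1 hγ.1 hγδ₁ ((mem_DeltaS_iff hT₁ne).1 hδ₁).1 hγδ₂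
    ((mem_DeltaS_iff hT₂ne).1 hδ₂).1
  exact Set.disjoint_left.1 (disjoint_DeltaS hcard hT₁ hT₂ hT₁ne hT₂ne hne) hδ₁ hδ₂

end Blocks

theorem matchings_when_bs_eq_one_general {V : Type*} [Fintype V]
    (Γ : SimpleGraph V) (hconn : Γ.Connected)
    (k : ℕ)
    (G : Subgroup (Equiv.Perm V)) (hGaut : IsAutSubgroup Γ G)
    (α : V) (s : ℕ) (hs : 1 ≤ s)
    -- local girth `λ(Γ,α) ≥ 2s+2`
    (hgα : ∀ w : Γ.Walk α α, w.IsCycle → 2 * s + 2 ≤ w.length)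
    -- `Δ` is a `G_α`-orbit in `Γ_{s+1}(α)`
    (Δ : Set V) (hΔsub : Δ ⊆ {v | Γ.dist α v = s + 1})
    (hΔorb : ∃ δ₀ ∈ Δ, Δ = {v | ∃ g ∈ G, (g : Equiv.Perm V) α = α ∧ g δ₀ = v})
    -- `β` enumerates the neighbours `β_1, …, β_k` of `α`
    (β : Fin k → V) (hβinj : Function.Injective β)
    (hβran : ∀ v : V, Γ.Adj α v ↔ ∃ j : Fin k, β j = v)
    -- `c_s' = |Γ(δ) ∩ Γ_s(α)|`, independent of `δ ∈ Δ`
    (c' : ℕ) (hc' : ∀ δ ∈ Δ, (Γ.neighborSet δ ∩ {w | Γ.dist α w = s}).ncard = c')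
    -- `b_s' = |Γ(γ) ∩ Δ| = 1` for every `γ ∈ Γ_s(α)`
    (hb1 : ∀ γ : V, Γ.dist α γ = s → (Γ.neighborSet γ ∩ Δ).ncard = 1) :
    ∀ j : Fin k, ∀ S ∈ Blocks Γ s Δ β c', j ∈ S →
      -- (i) the edges between `B_j` and `Δ_j` form a perfect matching
      ((∀ γ ∈ BJ Γ α s (β j), (Γ.neighborSet γ ∩ DeltaJ Γ s Δ (β j)).ncard = 1) ∧
        (∀ δ ∈ DeltaJ Γ s Δ (β j), (Γ.neighborSet δ ∩ BJ Γ α s (β j)).ncard = 1)) ∧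
      -- (ii) the edges between `B_j(S)` and `Δ(S)` form a perfect matching
      ((∀ γ ∈ BJS Γ α s Δ β j S, (Γ.neighborSet γ ∩ DeltaS Γ s Δ β S).ncard = 1) ∧
        (∀ δ ∈ DeltaS Γ s Δ β S, (Γ.neighborSet δ ∩ BJS Γ α s Δ β j S).ncard = 1)) ∧
      -- (iii) `{B_j(T) : T ∈ 𝓑(c_s',j)}` is a partition of `B_j`
      ((⋃ T ∈ {T | T ∈ Blocks Γ s Δ β c' ∧ j ∈ T}, BJS Γ α s Δ β j T) =
          BJ Γ α s (β j) ∧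
        ∀ T₁ ∈ {T | T ∈ Blocks Γ s Δ β c' ∧ j ∈ T},
          ∀ T₂ ∈ {T | T ∈ Blocks Γ s Δ β c' ∧ j ∈ T}, T₁ ≠ T₂ →
            BJS Γ α s Δ β j T₁ ∩ BJS Γ α s Δ β j T₂ = ∅) ∧
      -- (iv) `{Δ(T) : T ∈ 𝓑(c_s',j)}` is a partition of `Δ_j`
      ((⋃ T ∈ {T | T ∈ Blocks Γ s Δ β c' ∧ j ∈ T}, DeltaS Γ s Δ β T) =
          DeltaJ Γ s Δ (β j) ∧
        ∀ T₁ ∈ {T | T ∈ Blocks Γ s Δ β c' ∧ j ∈ T},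
          ∀ T₂ ∈ {T | T ∈ Blocks Γ s Δ β c' ∧ j ∈ T}, T₁ ≠ T₂ →
            DeltaS Γ s Δ β T₁ ∩ DeltaS Γ s Δ β T₂ = ∅) := by
  intro j S hS hjS
  have hβadj : ∀ i, Γ.Adj α (β i) := fun i => (hβran _).2 ⟨i, rfl⟩
  have hgirth : ∀ w : Γ.Walk α α, w.IsCycle → 2 * s < w.length := fun w hw => by
    have := hgα w hw
    omega
  obtain ⟨δ₀, -, hΔorb⟩ := hΔorb
  have horbit : ∀ δ ∈ Δ, #(branchesAt Γ s β δ) = #(branchesAt Γ s β δ₀) := fun δ hδ =>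
    card_branchesAt_eq_of_mem_orbit hGaut hβran hβinj (by rwa [hΔorb] at hδ)
  have hcard : ∀ δ ∈ Δ, #(branchesAt Γ s β δ) = c' := card_branchesAt_eq_of_mem_Blocks
    (fun δ hδ => hc' δ hδ ▸ card_branchesAt_le hconn hs hgirth hβinj hβran (hΔsub hδ))
    (fun δ hδ δ' hδ' => (horbit δ hδ).trans (horbit δ' hδ').symm) hS ⟨j, hjS⟩
  have hmatch : ∀ δ ∈ DeltaJ Γ s Δ (β j), (Γ.neighborSet δ ∩ BJ Γ α s (β j)).ncard = 1 :=
    fun δ hδ => ncard_neighborSet_inter_BJ_eq_one hconn hs hgirth hβinj hβran (hΔsub hδ.1)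
      ((hc' δ hδ.1).trans (hcard δ hδ.1).symm).le (mem_branchesAt.2 hδ.2)
  refine ⟨⟨fun γ hγ => ?_, hmatch⟩, ⟨fun γ hγ => ?_, fun δ hδ => ?_⟩,
    ⟨biUnion_BJS_eq_BJ hconn hs hΔsub hb1 hcard (hβadj j), fun T₁ hT₁ T₂ hT₂ hne => ?_⟩,
    ⟨biUnion_DeltaS_eq_DeltaJ hcard j, fun T₁ hT₁ T₂ hT₂ hne => ?_⟩⟩
  · rw [neighborSet_inter_DeltaJ_eq hconn hs hΔsub (hβadj j) hγ, hb1 γ hγ.1]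
  · rw [neighborSet_inter_DeltaS_eq hb1 ⟨j, hjS⟩ hγ, hb1 γ (BJS_subset_BJ hγ).1]
  · rw [neighborSet_inter_BJS_eq hδ]
    exact hmatch δ (DeltaS_subset_DeltaJ hjS hδ)
  · exact Set.disjoint_iff_inter_eq_empty.1
      (disjoint_BJS hb1 hcard hT₁.1 hT₂.1 ⟨j, hT₁.2⟩ ⟨j, hT₂.2⟩ hne)
  · exact Set.disjoint_iff_inter_eq_empty.1
      (disjoint_DeltaS hcard hT₁.1 hT₂.1 ⟨j, hT₁.2⟩ ⟨j, hT₂.2⟩ hne)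

theorem matchings_when_bs_eq_one {V : Type*} [Fintype V]
    (Γ : SimpleGraph V) (hconn : Γ.Connected)
    (k : ℕ) (hk : 3 ≤ k) (hreg : ∀ v : V, (Γ.neighborSet v).ncard = k)
    (G : Subgroup (Equiv.Perm V)) (hGaut : IsAutSubgroup Γ G)
    (α : V) (s : ℕ) (hs : 1 ≤ s)
    -- local girth `λ(Γ,α) ≥ 2s+2`
    (hgα : ∀ w : Γ.Walk α α, w.IsCycle → 2 * s + 2 ≤ w.length)
    (hgβ : ∀ b : V, Γ.Adj α b → ∀ w : Γ.Walk b b, w.IsCycle → 2 * s + 1 ≤ w.length)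
    -- `G_α` is transitive on `Γ_s(α)`
    (htrans : ∀ u v : V, Γ.dist α u = s → Γ.dist α v = s →
      ∃ g ∈ G, g α = α ∧ g u = v)
    -- `Δ` is a `G_α`-orbit in `Γ_{s+1}(α)`
    (Δ : Set V) (hΔsub : Δ ⊆ {v | Γ.dist α v = s + 1})
    (hΔorb : ∃ δ₀ ∈ Δ, Δ = {v | ∃ g ∈ G, (g : Equiv.Perm V) α = α ∧ g δ₀ = v})
    -- `β` enumerates the neighbours `β_1, …, β_k` of `α`
    (β : Fin k → V) (hβinj : Function.Injective β)
    (hβran : ∀ v : V, Γ.Adj α v ↔ ∃ j : Fin k, β j = v)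
    -- `c_s' = |Γ(δ) ∩ Γ_s(α)|`, independent of `δ ∈ Δ`
    (c' : ℕ) (hc' : ∀ δ ∈ Δ, (Γ.neighborSet δ ∩ {w | Γ.dist α w = s}).ncard = c')
    -- `b_s' = |Γ(γ) ∩ Δ| = 1` for every `γ ∈ Γ_s(α)`
    (hb1 : ∀ γ : V, Γ.dist α γ = s → (Γ.neighborSet γ ∩ Δ).ncard = 1) :
    ∀ j : Fin k, ∀ S ∈ Blocks Γ s Δ β c', j ∈ S →
      -- (i) the edges between `B_j` and `Δ_j` form a perfect matching
      ((∀ γ ∈ BJ Γ α s (β j), (Γ.neighborSet γ ∩ DeltaJ Γ s Δ (β j)).ncard = 1) ∧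
        (∀ δ ∈ DeltaJ Γ s Δ (β j), (Γ.neighborSet δ ∩ BJ Γ α s (β j)).ncard = 1)) ∧
      -- (ii) the edges between `B_j(S)` and `Δ(S)` form a perfect matching
      ((∀ γ ∈ BJS Γ α s Δ β j S, (Γ.neighborSet γ ∩ DeltaS Γ s Δ β S).ncard = 1) ∧
        (∀ δ ∈ DeltaS Γ s Δ β S, (Γ.neighborSet δ ∩ BJS Γ α s Δ β j S).ncard = 1)) ∧
      -- (iii) `{B_j(T) : T ∈ 𝓑(c_s',j)}` is a partition of `B_j`
      ((⋃ T ∈ {T | T ∈ Blocks Γ s Δ β c' ∧ j ∈ T}, BJS Γ α s Δ β j T) =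
          BJ Γ α s (β j) ∧
        ∀ T₁ ∈ {T | T ∈ Blocks Γ s Δ β c' ∧ j ∈ T},
          ∀ T₂ ∈ {T | T ∈ Blocks Γ s Δ β c' ∧ j ∈ T}, T₁ ≠ T₂ →
            BJS Γ α s Δ β j T₁ ∩ BJS Γ α s Δ β j T₂ = ∅) ∧
      -- (iv) `{Δ(T) : T ∈ 𝓑(c_s',j)}` is a partition of `Δ_j`
      ((⋃ T ∈ {T | T ∈ Blocks Γ s Δ β c' ∧ j ∈ T}, DeltaS Γ s Δ β T) =
          DeltaJ Γ s Δ (β j) ∧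
        ∀ T₁ ∈ {T | T ∈ Blocks Γ s Δ β c' ∧ j ∈ T},
          ∀ T₂ ∈ {T | T ∈ Blocks Γ s Δ β c' ∧ j ∈ T}, T₁ ≠ T₂ →
            DeltaS Γ s Δ β T₁ ∩ DeltaS Γ s Δ β T₂ = ∅) :=
  matchings_when_bs_eq_one_general Γ hconn k G hGaut α s hs hgα Δ hΔsub hΔorb β hβinj hβran c' hc'
    hb1
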